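/- arXiv:2602.10264 — 3 statements merged into one kernel-verified Lean document; each statement's English description precedes it below -/
import Mathlib

section
/- Let X, Y be independent standard real Gaussians and let s, t be real numbers with st > 0 and s² + t² = 1. Then E[|tX + isY|^{2q}] = q! (2st)^q L_q(1/(2st)), where L_q is the q-th Legendre polynomial. -/
/-!
Since `|tX + isY|² = t²X² + s²Y²`, the binomial theorem and the Gaussian moments
`E[X^{2k}] = (2k-1)‼` turn `E[|tX + isY|^{2q}]` into the finite sum `S_q(t², s²)`, where
`S_n(a, b) = ∑_{i+j=n} C(n,i) (2i-1)‼ (2j-1)‼ aⁱ bʲ` (`gaussianSqMoment`). A termwise identity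
gives the three-term recurrence `S_{n+2} = (2n+3)(a+b) S_{n+1} - 4(n+1)² ab S_n`; when
`c² = 4ab` this is Bonnet's recurrence for `n! cⁿ L_n((a+b)/c)`, and `c = 2st`,
`a + b = s² + t² = 1` gives the claim.
-/

open MeasureTheory ProbabilityTheory

/-- The Legendre polynomials, defined by the Bonnet recurrence
`(n+2) L_{n+2}(x) = (2n+3) x L_{n+1}(x) - (n+1) L_n(x)`, with `L_0 = 1`, `L_1 = x`.
They are the orthogonal polynomials for the uniform weight on `[-1,1]`, normalized by
`L_q(1) = 1`, with generating function `(1-2xz+z²)^{-1/2} = ∑_q L_q(x) z^q`. -/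
noncomputable def legendre : ℕ → ℝ → ℝ
  | 0, _ => 1
  | 1, x => x
  | n + 2, x =>
      ((2 * n + 3) * x * legendre (n + 1) x - (n + 1) * legendre n x) / (n + 2)

open Real Finset
open scoped Nat NNReal

theorem integral_pow_two_mul_mul_exp_neg_mul_sq {b : ℝ} (hb : 0 < b) (k : ℕ) :
    ∫ x : ℝ, x ^ (2 * k) * exp (-b * x ^ 2) = Gamma (k + 1 / 2) / b ^ ((k : ℝ) + 1 / 2) := by
  have hq : (-1 : ℝ) < (2 * k : ℕ) := neg_one_lt_zero.trans_le (Nat.cast_nonneg _)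
  calc ∫ x : ℝ, x ^ (2 * k) * exp (-b * x ^ 2)
      = ∫ x : ℝ, (fun y : ℝ ↦ y ^ ((2 * k : ℕ) : ℝ) * exp (-b * y ^ (2 : ℝ))) |x| := by
        simp only [rpow_natCast, rpow_two, (even_two_mul k).pow_abs, sq_abs]
    _ = Gamma (k + 1 / 2) / b ^ ((k : ℝ) + 1 / 2) := by
        rw [integral_comp_abs (f := fun y : ℝ ↦ y ^ ((2 * k : ℕ) : ℝ) * exp (-b * y ^ (2 : ℝ))),
          integral_rpow_mul_exp_neg_mul_rpow two_pos hq hb]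
        rw [show (((2 * k : ℕ) : ℝ) + 1) / 2 = k + 1 / 2 by push_cast; ring,
          show -(((2 * k : ℕ) : ℝ) + 1) / 2 = -(k + 1 / 2) by push_cast; ring, rpow_neg hb.le]
        field_simp

theorem integral_pow_two_mul_gaussianReal (v : ℝ≥0) (k : ℕ) :
    ∫ x, x ^ (2 * k) ∂gaussianReal 0 v = v ^ k * (2 * k - 1 : ℕ)‼ := by
  rcases eq_or_ne v 0 with rfl | hv
  · cases k <;> simp [gaussianReal_zero_var]
  rw [integral_gaussianReal_eq_integral_smul hv]
  simp only [gaussianPDFReal, sub_zero, smul_eq_mul]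
  have hintegrand : ∀ x : ℝ, (√(2 * π * v))⁻¹ * rexp (-x ^ 2 / (2 * v)) * x ^ (2 * k)
      = (√(2 * π * v))⁻¹ * (x ^ (2 * k) * rexp (-(2 * v : ℝ)⁻¹ * x ^ 2)) := fun x ↦ by ring_nf
  simp_rw [hintegrand, integral_const_mul]
  rw [integral_pow_two_mul_mul_exp_neg_mul_sq (by positivity), Gamma_nat_add_half]
  have h2v : (0 : ℝ) < 2 * v := by positivity
  rw [inv_rpow h2v.le, rpow_add h2v, rpow_natCast, ← sqrt_eq_rpow, mul_comm 2 π, mul_assoc,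
    sqrt_mul pi_nonneg, mul_pow]
  have hsqrt : 0 < √(2 * (v : ℝ)) := sqrt_pos.2 h2v
  field_simp

lemma integrable_pow_gaussianReal (μ : ℝ) (v : ℝ≥0) (n : ℕ) :
    Integrable (fun x ↦ x ^ n) (gaussianReal μ v) :=
  integrable_pow_of_mem_interior_integrableExpSet (X := id)
    (by simp [integrableExpSet_id_gaussianReal]) n

lemma Nat.doubleFactorial_two_mul_add_one_sub_one (k : ℕ) :
    (2 * (k + 1) - 1)‼ = (2 * k + 1) * (2 * k - 1)‼ := by
  rw [show 2 * (k + 1) - 1 = 2 * k + 1 by omega, Nat.doubleFactorial_add_one]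

/-- In `ℕ`, `2 * 0 - 1 = 0` and `0‼ = 1`, which is the right value `(-1)‼ = 1` for `i = 0`. -/
noncomputable def gaussianSqMomentTerm (a b : ℝ) (i j : ℕ) : ℝ :=
  ((i + j).choose i : ℝ) * (2 * i - 1 : ℕ)‼ * (2 * j - 1 : ℕ)‼ * a ^ i * b ^ j

noncomputable def gaussianSqMoment (a b : ℝ) (n : ℕ) : ℝ :=
  ∑ p ∈ antidiagonal n, gaussianSqMomentTerm a b p.1 p.2

theorem integral_sq_add_sq_pow_gaussianReal_prod (v w : ℝ≥0) (a b : ℝ) (n : ℕ) :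
    ∫ p : ℝ × ℝ, (a * p.1 ^ 2 + b * p.2 ^ 2) ^ n ∂(gaussianReal 0 v).prod (gaussianReal 0 w) =
      gaussianSqMoment (v * a) (w * b) n := by
  have hterm : ∀ i j : ℕ,
      (fun p : ℝ × ℝ ↦ ((i + j).choose i : ℝ) * ((a * p.1 ^ 2) ^ i * (b * p.2 ^ 2) ^ j)) =
        fun p ↦ ((i + j).choose i * a ^ i * p.1 ^ (2 * i)) * (b ^ j * p.2 ^ (2 * j)) := by
    intro i j
    ext p
    ring
  calc ∫ p : ℝ × ℝ, (a * p.1 ^ 2 + b * p.2 ^ 2) ^ n ∂(gaussianReal 0 v).prod (gaussianReal 0 w)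
      = ∫ p : ℝ × ℝ, ∑ ij ∈ antidiagonal n, ((ij.1 + ij.2).choose ij.1 : ℝ)
          * ((a * p.1 ^ 2) ^ ij.1 * (b * p.2 ^ 2) ^ ij.2)
          ∂(gaussianReal 0 v).prod (gaussianReal 0 w) := by
        congr 1 with p
        rw [(Commute.all _ _).add_pow']
        refine sum_congr rfl fun ij hij ↦ ?_
        rw [nsmul_eq_mul, mem_antidiagonal.1 hij]
    _ = ∑ ij ∈ antidiagonal n, ∫ p : ℝ × ℝ, ((ij.1 + ij.2).choose ij.1 : ℝ)
          * ((a * p.1 ^ 2) ^ ij.1 * (b * p.2 ^ 2) ^ ij.2)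
          ∂(gaussianReal 0 v).prod (gaussianReal 0 w) := by
        refine integral_finsetSum _ fun ij _ ↦ ?_
        rw [hterm]
        exact ((integrable_pow_gaussianReal 0 v _).const_mul _).mul_prod
          ((integrable_pow_gaussianReal 0 w _).const_mul _)
    _ = gaussianSqMoment (v * a) (w * b) n := by
        refine sum_congr rfl fun ij _ ↦ ?_
        rw [hterm,
          integral_prod_mul (fun x ↦ (ij.1 + ij.2).choose ij.1 * a ^ ij.1 * x ^ (2 * ij.1))
            (fun y ↦ b ^ ij.2 * y ^ (2 * ij.2)),
          integral_const_mul, integral_const_mul, integral_pow_two_mul_gaussianReal,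
          integral_pow_two_mul_gaussianReal, gaussianSqMomentTerm]
        ring

section
variable (a b : ℝ)

lemma gaussianSqMomentTerm_zero_succ (j : ℕ) :
    gaussianSqMomentTerm a b 0 (j + 1) = (2 * j + 1) * b * gaussianSqMomentTerm a b 0 j := by
  simp only [gaussianSqMomentTerm, zero_add, Nat.choose_zero_right,
    Nat.doubleFactorial_two_mul_add_one_sub_one]
  push_cast
  ring

lemma gaussianSqMomentTerm_succ_zero (i : ℕ) :
    gaussianSqMomentTerm a b (i + 1) 0 = (2 * i + 1) * a * gaussianSqMomentTerm a b i 0 := by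
  simp only [gaussianSqMomentTerm, add_zero, Nat.choose_self,
    Nat.doubleFactorial_two_mul_add_one_sub_one]
  push_cast
  ring

lemma gaussianSqMomentTerm_succ_succ (i j : ℕ) :
    gaussianSqMomentTerm a b (i + 1) (j + 1) =
      (2 * (i + j) + 3) * a * gaussianSqMomentTerm a b i (j + 1)
        + (2 * (i + j) + 3) * b * gaussianSqMomentTerm a b (i + 1) j
        - 4 * (i + j + 1) ^ 2 * (a * b) * gaussianSqMomentTerm a b i j := by
  simp only [gaussianSqMomentTerm, Nat.cast_add_choose,
    Nat.doubleFactorial_two_mul_add_one_sub_one]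
  rw [show i + 1 + (j + 1) = i + j + 1 + 1 by ring, show i + (j + 1) = i + j + 1 by ring,
    show i + 1 + j = i + j + 1 by ring]
  simp only [Nat.factorial_succ]
  push_cast
  field_simp
  ring

lemma gaussianSqMoment_add_two (n : ℕ) :
    gaussianSqMoment a b (n + 2) =
      (2 * n + 3) * (a + b) * gaussianSqMoment a b (n + 1)
        - 4 * (n + 1) ^ 2 * (a * b) * gaussianSqMoment a b n := by
  have hS₂ : gaussianSqMoment a b (n + 2) = gaussianSqMomentTerm a b 0 (n + 2)
      + gaussianSqMomentTerm a b (n + 2) 0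
      + ∑ p ∈ antidiagonal n, gaussianSqMomentTerm a b (p.1 + 1) (p.2 + 1) := by
    rw [gaussianSqMoment, Nat.sum_antidiagonal_succ, Nat.sum_antidiagonal_succ', ← add_assoc]
  have hS₁ : gaussianSqMoment a b (n + 1) = gaussianSqMomentTerm a b 0 (n + 1)
      + ∑ p ∈ antidiagonal n, gaussianSqMomentTerm a b (p.1 + 1) p.2 :=
    Nat.sum_antidiagonal_succ
  have hS₁' : gaussianSqMoment a b (n + 1) = gaussianSqMomentTerm a b (n + 1) 0
      + ∑ p ∈ antidiagonal n, gaussianSqMomentTerm a b p.1 (p.2 + 1) :=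
    Nat.sum_antidiagonal_succ'
  have hinterior : ∑ p ∈ antidiagonal n, gaussianSqMomentTerm a b (p.1 + 1) (p.2 + 1) =
      (2 * n + 3) * a * ∑ p ∈ antidiagonal n, gaussianSqMomentTerm a b p.1 (p.2 + 1)
        + (2 * n + 3) * b * ∑ p ∈ antidiagonal n, gaussianSqMomentTerm a b (p.1 + 1) p.2
        - 4 * (n + 1) ^ 2 * (a * b) * gaussianSqMoment a b n := by
    simp only [gaussianSqMoment, mul_sum, ← sum_add_distrib, ← sum_sub_distrib]
    refine sum_congr rfl fun p hp ↦ ?_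
    rw [gaussianSqMomentTerm_succ_succ, ← mem_antidiagonal.1 hp]
    push_cast
    ring
  rw [hS₂, hinterior, gaussianSqMomentTerm_zero_succ a b (n + 1),
    gaussianSqMomentTerm_succ_zero a b (n + 1)]
  push_cast
  linear_combination (-(2 * n + 3) * b) * hS₁ - (2 * n + 3) * a * hS₁'

end

theorem gaussianSqMoment_eq_legendre {a b c : ℝ} (hc : c ≠ 0) (habc : c ^ 2 = 4 * a * b)
    (n : ℕ) :
    gaussianSqMoment a b n = n ! * c ^ n * legendre n ((a + b) / c) := by
  induction n using Nat.twoStepInduction with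
  | zero => simp [gaussianSqMoment, gaussianSqMomentTerm, legendre]
  | one =>
    simp [gaussianSqMoment, gaussianSqMomentTerm, Nat.sum_antidiagonal_succ, legendre,
      mul_div_cancel₀ _ hc, add_comm]
  | more n ih ih_succ =>
    rw [gaussianSqMoment_add_two, ih, ih_succ, legendre, Nat.factorial_succ (n + 1),
      Nat.factorial_succ n]
    push_cast
    field_simp
    linear_combination (n + 1 : ℝ) * (n + 2) * c ^ (n + 1) * legendre n ((a + b) / c) * habc

/-- For `X, Y` independent standard real Gaussians and real `s, t` with
`st > 0` and `s² + t² = 1`, one has `E[|tX + isY|^{2q}] = q! (2st)^q L_q(1/(2st))`. -/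
theorem expectation_abs_pow_eq_legendre (q : ℕ) (s t : ℝ) (hst : s * t > 0)
    (hst1 : s ^ 2 + t ^ 2 = 1) :
    ∫ p : ℝ × ℝ, ‖(t * p.1 + s * p.2 * Complex.I : ℂ)‖ ^ (2 * q)
        ∂((gaussianReal 0 1).prod (gaussianReal 0 1)) =
      (Nat.factorial q : ℝ) * (2 * s * t) ^ q * legendre q (1 / (2 * s * t)) := by
  have hnorm : ∀ p : ℝ × ℝ, ‖(t * p.1 + s * p.2 * Complex.I : ℂ)‖ ^ (2 * q)
      = (t ^ 2 * p.1 ^ 2 + s ^ 2 * p.2 ^ 2) ^ q := fun p ↦ by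
    rw [pow_mul, Complex.sq_norm, ← Complex.ofReal_mul, ← Complex.ofReal_mul,
      Complex.normSq_add_mul_I]
    ring
  have hc : 2 * s * t ≠ 0 := by
    rw [mul_assoc]
    exact mul_ne_zero two_ne_zero hst.ne'
  simp_rw [hnorm]
  rw [integral_sq_add_sq_pow_gaussianReal_prod, NNReal.coe_one, one_mul, one_mul,
    gaussianSqMoment_eq_legendre hc (by ring), add_comm, hst1]
end

section
/- For every integer q ≥ 2, the function x ↦ q! x^{-q} L_q(x) is strictly increasing on [1, ∞), equals q! at x = 1, and tends to (2q-1)!! as x → ∞. -/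
/-!
The three-term recurrence gives the identities
`(n + 2) (L_{n+2} - x L_{n+1}) = (n + 1) (x (L_{n+1} - x L_n) + (x² - 1) L_n)` and
`(x² - 1) L_{n+1}' = (n + 1) (x L_{n+1} - L_n)`.
The first shows inductively that `x L_n ≤ L_{n+1}` on `[1, ∞)`, strictly for `n ≥ 1` and `x > 1`;
the second turns this into `x L_q' > q L_q` on `(1, ∞)` for `q ≥ 2`, which is the sign of the
derivative of `L_q(x) / x^q`. The limit comes from the recurrence
`g_{n+2} = (2n + 3) g_{n+1} - (n + 1)² g_n / x²` for `g_n = n! L_n(x) / x^n`.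
-/

open Filter

noncomputable def legendreDeriv : ℕ → ℝ → ℝ
  | 0, _ => 0
  | 1, _ => 1
  | n + 2, x =>
      ((2 * n + 3) * (legendre (n + 1) x + x * legendreDeriv (n + 1) x)
        - (n + 1) * legendreDeriv n x) / (n + 2)

lemma legendre_add_two_mul (n : ℕ) (x : ℝ) :
    ((n : ℝ) + 2) * legendre (n + 2) x
      = (2 * n + 3) * x * legendre (n + 1) x - (n + 1) * legendre n x := by
  rw [legendre]
  field_simp

lemma legendreDeriv_add_two_mul (n : ℕ) (x : ℝ) :
    ((n : ℝ) + 2) * legendreDeriv (n + 2) x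
      = (2 * n + 3) * (legendre (n + 1) x + x * legendreDeriv (n + 1) x)
        - (n + 1) * legendreDeriv n x := by
  rw [legendreDeriv]
  field_simp

lemma legendre_apply_one (n : ℕ) : legendre n 1 = 1 := by
  induction n using Nat.twoStepInduction with
  | zero => rfl
  | one => rfl
  | more n ih₀ ih₁ =>
    rw [legendre, ih₀, ih₁]
    field_simp
    ring

lemma hasDerivAt_legendre (n : ℕ) (x : ℝ) :
    HasDerivAt (legendre n) (legendreDeriv n x) x := by
  induction n using Nat.twoStepInduction generalizing x with
  | zero => exact hasDerivAt_const x (1 : ℝ)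
  | one => exact hasDerivAt_id x
  | more n ih₀ ih₁ =>
    have h := ((((hasDerivAt_id x).const_mul (2 * (n : ℝ) + 3)).mul (ih₁ x)).sub
      ((ih₀ x).const_mul ((n : ℝ) + 1))).div_const ((n : ℝ) + 2)
    rw [legendreDeriv]
    exact h.congr_deriv (by simp only [id_eq]; ring)

lemma sq_sub_one_mul_legendreDeriv (n : ℕ) (x : ℝ) :
    (x ^ 2 - 1) * legendreDeriv (n + 1) x
      = ((n : ℝ) + 1) * (x * legendre (n + 1) x - legendre n x) := by
  induction n using Nat.twoStepInduction generalizing x with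
  | zero =>
    simp only [legendre, legendreDeriv, Nat.cast_zero]
    ring
  | one =>
    have hD := legendreDeriv_add_two_mul 0 x
    have hL := legendre_add_two_mul 0 x
    simp only [legendre, legendreDeriv] at hD hL ⊢
    push_cast at hD hL ⊢
    linear_combination (x ^ 2 - 1) / 2 * hD - x * hL
  | more n ih₀ ih₁ =>
    have h₀ := ih₀ x
    have h₁ := ih₁ x
    have hL₂ := legendre_add_two_mul n x
    have hL₃ := legendre_add_two_mul (n + 1) x
    have hD₃ := legendreDeriv_add_two_mul (n + 1) x
    push_cast at h₀ h₁ hL₂ hL₃ hD₃ ⊢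
    refine mul_left_cancel₀ (by positivity : (n : ℝ) + 3 ≠ 0) ?_
    linear_combination (x ^ 2 - 1) * hD₃ + (2 * (n : ℝ) + 5) * x * h₁ - ((n : ℝ) + 2) * h₀
      - ((n : ℝ) + 3) * x * hL₃ + ((n : ℝ) + 2) * hL₂

lemma legendre_add_two_sub_mul (n : ℕ) (x : ℝ) :
    ((n : ℝ) + 2) * (legendre (n + 2) x - x * legendre (n + 1) x)
      = ((n : ℝ) + 1) * (x * (legendre (n + 1) x - x * legendre n x)
        + (x ^ 2 - 1) * legendre n x) := by
  linear_combination legendre_add_two_mul n x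

lemma legendre_pos_and_mul_le {x : ℝ} (hx : 1 ≤ x) (n : ℕ) :
    0 < legendre n x ∧ x * legendre n x ≤ legendre (n + 1) x := by
  induction n with
  | zero => exact ⟨one_pos, by simp [legendre]⟩
  | succ n ih =>
    obtain ⟨hpos, hle⟩ := ih
    have hx2 : 0 ≤ x ^ 2 - 1 := by nlinarith
    have hstep := legendre_add_two_sub_mul n x
    refine ⟨by nlinarith, ?_⟩
    nlinarith [mul_nonneg (by linarith : (0 : ℝ) ≤ x) (sub_nonneg.2 hle),
      mul_nonneg hx2 hpos.le]

lemma mul_legendre_lt_legendre_add_two {x : ℝ} (hx : 1 < x) (n : ℕ) :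
    x * legendre (n + 1) x < legendre (n + 2) x := by
  obtain ⟨hpos, hle⟩ := legendre_pos_and_mul_le hx.le n
  have hx2 : 0 < x ^ 2 - 1 := by nlinarith
  have hstep := legendre_add_two_sub_mul n x
  nlinarith [mul_nonneg (by linarith : (0 : ℝ) ≤ x) (sub_nonneg.2 hle), mul_pos hx2 hpos]

lemma mul_legendre_lt_mul_legendreDeriv {x : ℝ} (hx : 1 < x) (n : ℕ) :
    ((n : ℝ) + 2) * legendre (n + 2) x < x * legendreDeriv (n + 2) x := by
  have hlt := mul_legendre_lt_legendre_add_two hx n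
  have hD : (x ^ 2 - 1) * legendreDeriv (n + 2) x
      = ((n : ℝ) + 2) * (x * legendre (n + 2) x - legendre (n + 1) x) := by
    simpa [add_assoc, one_add_one_eq_two] using sq_sub_one_mul_legendreDeriv (n + 1) x
  have hprod : 0 < (x ^ 2 - 1) * (x * legendreDeriv (n + 2) x
      - ((n : ℝ) + 2) * legendre (n + 2) x) := by
    have : 0 < ((n : ℝ) + 2) * (legendre (n + 2) x - x * legendre (n + 1) x) :=
      mul_pos (by positivity) (by linarith)
    linear_combination this - x * hD
  have hx2 : 0 < x ^ 2 - 1 := by nlinarith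
  linarith [pos_of_mul_pos_right hprod hx2.le]

lemma strictMonoOn_legendre_div_pow (n : ℕ) :
    StrictMonoOn (fun x : ℝ => legendre (n + 2) x / x ^ (n + 2)) (Set.Ici 1) := by
  have hderiv : ∀ x : ℝ, 0 < x → HasDerivAt (fun x : ℝ => legendre (n + 2) x / x ^ (n + 2))
      (x ^ (n + 1) * (x * legendreDeriv (n + 2) x - ((n : ℝ) + 2) * legendre (n + 2) x)
        / (x ^ (n + 2)) ^ 2) x := fun x hx => by
    refine ((hasDerivAt_legendre (n + 2) x).div (hasDerivAt_pow (n + 2) x)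
      (by positivity)).congr_deriv ?_
    rw [show n + 2 - 1 = n + 1 by omega]
    push_cast
    ring
  apply strictMonoOn_of_deriv_pos (convex_Ici 1)
  · exact fun x hx => (hderiv x (zero_lt_one.trans_le hx)).continuousAt.continuousWithinAt
  · intro x hx
    rw [interior_Ici] at hx
    have hx0 : 0 < x := zero_lt_one.trans hx
    rw [(hderiv x hx0).deriv]
    have := mul_legendre_lt_mul_legendreDeriv hx n
    exact div_pos (mul_pos (by positivity) (by linarith)) (by positivity)

lemma tendsto_factorial_mul_legendre_div_pow (n : ℕ) :
    Tendsto (fun x : ℝ => (Nat.factorial n : ℝ) * legendre n x / x ^ n) atTop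
      (nhds (Nat.doubleFactorial (2 * n - 1) : ℝ)) := by
  induction n using Nat.twoStepInduction with
  | zero => simp [legendre]
  | one =>
    refine tendsto_const_nhds.congr' ?_
    filter_upwards [eventually_ne_atTop (0 : ℝ)] with x hx
    simp [legendre, hx]
  | more n ih₀ ih₁ =>
    rw [show 2 * (n + 1) - 1 = 2 * n + 1 by omega] at ih₁
    have hinv : Tendsto (fun x : ℝ => (x ^ 2)⁻¹) atTop (nhds 0) :=
      (tendsto_pow_atTop two_ne_zero).inv_tendsto_atTop
    have h := (ih₁.const_mul (2 * (n : ℝ) + 3)).sub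
      ((ih₀.const_mul (((n : ℝ) + 1) ^ 2)).mul hinv)
    rw [show 2 * (n + 2) - 1 = 2 * n + 1 + 2 by omega, Nat.doubleFactorial_add_two]
    convert h.congr' ?_ using 2
    · push_cast
      ring
    filter_upwards [eventually_ne_atTop (0 : ℝ)] with x hx
    rw [legendre]
    simp only [Nat.factorial_succ]
    push_cast
    field_simp
    ring

/-- For every integer `q ≥ 2`, the function `x ↦ q! x^{-q} L_q(x)` is strictly
increasing on `[1, ∞)`, equals `q!` at `x = 1`, and tends to `(2q-1)!!` as `x → ∞`. -/
theorem factorial_mul_legendre_div_pow_strictMono (q : ℕ) (hq : 2 ≤ q) :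
    StrictMonoOn (fun x : ℝ => (Nat.factorial q : ℝ) * legendre q x / x ^ q) (Set.Ici 1) ∧
    (Nat.factorial q : ℝ) * legendre q 1 / 1 ^ q = (Nat.factorial q : ℝ) ∧
    Tendsto (fun x : ℝ => (Nat.factorial q : ℝ) * legendre q x / x ^ q) atTop
      (nhds (Nat.doubleFactorial (2 * q - 1) : ℝ)) := by
  obtain ⟨n, rfl⟩ : ∃ n, q = n + 2 := ⟨q - 2, by omega⟩
  refine ⟨fun x hx y hy hxy => ?_, by simp [legendre_apply_one],
    tendsto_factorial_mul_legendre_div_pow _⟩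
  simp only [mul_div_assoc]
  exact mul_lt_mul_of_pos_left (strictMonoOn_legendre_div_pow n hx hy hxy) (by positivity)
end

section
/- Let O be a Haar-distributed orthogonal matrix in O(N). Then for natural numbers k, j, E[O_{11}^{2k} O_{21}^{2j}] = (2k-1)!! (2j-1)!! / (N(N+2)⋯(N+2k+2j-2)). -/
/-!
Rotating the plane of rows `a` and `b` through an angle `θ` preserves a left-invariant measure,
so averaging over `θ` gives
`2π E[O_{al}^p O_{bl}^q] = T(p, q) E[(O_{al}^2 + O_{bl}^2)^{(p+q)/2}]`, where
`T(p, q) = ∫₀^{2π} cos^p θ sin^q θ dθ`. The mixed moment is therefore the pure moment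
`E[O_{al}^{p+q}]` times `T(p, q) / T(p + q, 0)`, and integration by parts evaluates this ratio
as `(2k-1)‼ (2j-1)‼ / (2k+2j-1)‼` for `p = 2k`, `q = 2j`. For the pure moments, the column of
`O` is a unit vector whose entries off row `a` are exchangeable, so
`E[O_{al}^{2n}] = E[O_{al}^{2n+2}] + (N - 1) E[O_{al}^{2n} O_{bl}^2]`, and the mixed moment on the
right is `E[O_{al}^{2n+2}] / (2n+1)`; thus `(N + 2n) E[O_{al}^{2n+2}] = (2n+1) E[O_{al}^{2n}]`.
-/

open MeasureTheory

noncomputable instance matrixMeasurableSpace (N : ℕ) :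
    MeasurableSpace (Matrix (Fin N) (Fin N) ℝ) :=
  MeasurableSpace.pi

open Real intervalIntegral
open scoped Nat

noncomputable def trigMoment (p q : ℕ) : ℝ := ∫ θ in 0..2 * π, cos θ ^ p * sin θ ^ q

theorem trigMoment_add_two_right (p q : ℕ) :
    (p + 1) * trigMoment p (q + 2) = (q + 1) * trigMoment (p + 2) q := by
  have hderiv (θ : ℝ) : HasDerivAt (fun θ => sin θ ^ (q + 1) * cos θ ^ (p + 1))
      ((q + 1) * (cos θ ^ (p + 2) * sin θ ^ q) - (p + 1) * (cos θ ^ p * sin θ ^ (q + 2)))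
      θ := by
    refine (((hasDerivAt_sin θ).fun_pow (q + 1)).fun_mul
      ((hasDerivAt_cos θ).fun_pow (p + 1))).congr_deriv ?_
    simp only [Nat.add_sub_cancel]
    push_cast
    ring
  have hint (p q : ℕ) :
      IntervalIntegrable (fun θ => cos θ ^ p * sin θ ^ q) volume 0 (2 * π) :=
    (by fun_prop : Continuous fun θ => cos θ ^ p * sin θ ^ q).intervalIntegrable _ _
  have hFTC := integral_eq_sub_of_hasDerivAt (fun θ _ => hderiv θ)
    (((hint _ _).const_mul _).sub ((hint _ _).const_mul _))
  rw [integral_sub ((hint _ _).const_mul _) ((hint _ _).const_mul _),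
    intervalIntegral.integral_const_mul, intervalIntegral.integral_const_mul] at hFTC
  simp only [sin_two_pi, sin_zero, cos_two_pi, cos_zero] at hFTC
  unfold trigMoment
  linear_combination (-1 : ℝ) * hFTC

theorem trigMoment_pos {p q : ℕ} (hp : Even p) (hq : Even q) : 0 < trigMoment p q := by
  have hcont : Continuous fun θ : ℝ => cos θ ^ p * sin θ ^ q := by fun_prop
  have hfirst : 0 < ∫ θ in 0..π / 2, cos θ ^ p * sin θ ^ q := by
    refine intervalIntegral_pos_of_pos_on (hcont.intervalIntegrable _ _) (fun θ hθ => ?_)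
      (by positivity)
    have := cos_pos_of_mem_Ioo ⟨by linarith [hθ.1, pi_pos], hθ.2⟩
    have := sin_pos_of_pos_of_lt_pi hθ.1 (by linarith [hθ.2, pi_pos])
    positivity
  have hrest : 0 ≤ ∫ θ in π / 2..2 * π, cos θ ^ p * sin θ ^ q :=
    integral_nonneg (by linarith [pi_pos]) fun θ _ =>
      mul_nonneg (hp.pow_nonneg _) (hq.pow_nonneg _)
  rw [trigMoment, ← integral_add_adjacent_intervals (hcont.intervalIntegrable 0 (π / 2))
    (hcont.intervalIntegrable _ _)]
  linarith

theorem doubleFactorial_mul_trigMoment (k j : ℕ) :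
    ((2 * (k + j) - 1)‼ : ℝ) * trigMoment (2 * k) (2 * j) =
      (2 * k - 1)‼ * (2 * j - 1)‼ * trigMoment (2 * (k + j)) 0 := by
  induction j generalizing k with
  | zero => simp
  | succ j ih =>
    have hodd (n : ℕ) : ((2 * (n + 1) - 1)‼ : ℝ) = (2 * n + 1) * (2 * n - 1)‼ := by
      rw [show 2 * (n + 1) - 1 = 2 * n + 1 by omega, Nat.doubleFactorial_add_one]
      push_cast; rfl
    have hrec := trigMoment_add_two_right (2 * k) (2 * j)
    have hshift := ih (k + 1)
    rw [show k + 1 + j = k + (j + 1) by ring] at hshift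
    refine mul_left_cancel₀ (by positivity : (2 * k + 1 : ℝ) ≠ 0) ?_
    rw [hodd] at hshift ⊢
    push_cast at hrec
    rw [show 2 * (j + 1) = 2 * j + 2 by ring]
    linear_combination ((2 * (k + (j + 1)) - 1)‼ : ℝ) * hrec + (2 * j + 1 : ℝ) * hshift

theorem exists_polar_angle (x y : ℝ) :
    ∃ α, x = √(x ^ 2 + y ^ 2) * cos α ∧ y = √(x ^ 2 + y ^ 2) * sin α := by
  have hr : √(x ^ 2 + y ^ 2) = ‖(⟨x, y⟩ : ℂ)‖ := by
    rw [Complex.norm_def, Complex.normSq_mk]; ring_nf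
  exact ⟨Complex.arg ⟨x, y⟩, by rw [hr, Complex.norm_mul_cos_arg],
    by rw [hr, Complex.norm_mul_sin_arg]⟩

theorem integral_rotate_pow_mul_pow (p q : ℕ) (x y : ℝ) :
    ∫ θ in 0..2 * π, (cos θ * x - sin θ * y) ^ p * (sin θ * x + cos θ * y) ^ q =
      √(x ^ 2 + y ^ 2) ^ (p + q) * trigMoment p q := by
  obtain ⟨α, hx, hy⟩ := exists_polar_angle x y
  set r := √(x ^ 2 + y ^ 2)
  have hperiodic : Function.Periodic (fun θ => cos θ ^ p * sin θ ^ q) (2 * π) := fun θ => by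
    simp only [cos_add_two_pi, sin_add_two_pi]
  calc ∫ θ in 0..2 * π, (cos θ * x - sin θ * y) ^ p * (sin θ * x + cos θ * y) ^ q
      = ∫ θ in 0..2 * π, r ^ (p + q) * (cos (θ + α) ^ p * sin (θ + α) ^ q) := by
        congr 1; ext θ
        rw [cos_add, sin_add, hx, hy, pow_add, mul_mul_mul_comm, ← mul_pow, ← mul_pow]
        ring_nf
    _ = r ^ (p + q) * trigMoment p q := by
        rw [intervalIntegral.integral_const_mul,
          integral_comp_add_right (fun θ => cos θ ^ p * sin θ ^ q), zero_add, add_comm (2 * π),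
          hperiodic.intervalIntegral_add_eq α 0, zero_add, trigMoment]

namespace Matrix

variable {n : Type*} [DecidableEq n]

noncomputable def planeRotation (a b : n) (θ : ℝ) : Matrix n n ℝ :=
  of fun i l =>
    if i = a then (if l = a then cos θ else if l = b then -sin θ else 0)
    else if i = b then (if l = a then sin θ else if l = b then cos θ else 0)
    else if i = l then 1 else 0

variable [Fintype n] {a b : n} (θ : ℝ)

theorem planeRotation_mul_apply_left (hab : a ≠ b) (M : Matrix n n ℝ) (l : n) :
    (planeRotation a b θ * M) a l = cos θ * M a l - sin θ * M b l := by
  simp [mul_apply, planeRotation, ite_mul, Finset.sum_ite, Finset.filter_ne', Finset.filter_eq',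
    hab.symm]
  ring

theorem planeRotation_mul_apply_right (hab : a ≠ b) (M : Matrix n n ℝ) (l : n) :
    (planeRotation a b θ * M) b l = sin θ * M a l + cos θ * M b l := by
  simp [mul_apply, planeRotation, ite_mul, Finset.sum_ite, Finset.filter_ne', Finset.filter_eq',
    hab.symm]

theorem planeRotation_mul_apply_of_ne {i : n} (hia : i ≠ a) (hib : i ≠ b) (M : Matrix n n ℝ)
    (l : n) : (planeRotation a b θ * M) i l = M i l := by
  simp [mul_apply, planeRotation, hia, hib]

theorem planeRotation_mem_orthogonalGroup (hab : a ≠ b) :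
    planeRotation a b θ ∈ orthogonalGroup n ℝ := by
  rw [mem_orthogonalGroup_iff]
  ext i l
  by_cases hia : i = a
  · subst i
    rw [planeRotation_mul_apply_left θ hab]
    by_cases hla : l = a
    · subst l; simp [planeRotation, hab.symm, ← sq]
    by_cases hlb : l = b
    · subst l; simp [planeRotation, hab, hab.symm]; ring
    simp [planeRotation, hla, hlb, Ne.symm hla]
  by_cases hib : i = b
  · subst i
    rw [planeRotation_mul_apply_right θ hab]
    by_cases hla : l = a
    · subst l; simp [planeRotation, hab.symm]; ring
    by_cases hlb : l = b
    · subst l; simp [planeRotation, hab.symm, ← sq]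
    simp [planeRotation, hla, hlb, Ne.symm hlb]
  rw [planeRotation_mul_apply_of_ne θ hia hib]
  by_cases hil : i = l
  · subst l; simp [planeRotation, hia, hib]
  simp [planeRotation, hia, hib, hil, Ne.symm hil]

noncomputable def planeRotationOrthogonal (hab : a ≠ b) : orthogonalGroup n ℝ :=
  ⟨planeRotation a b θ, planeRotation_mem_orthogonalGroup θ hab⟩

theorem sum_sq_apply_of_mem_orthogonalGroup {A : Matrix n n ℝ} (hA : A ∈ orthogonalGroup n ℝ)
    (l : n) : ∑ i, A i l ^ 2 = 1 := by
  simpa [mul_apply, sq] using congrFun (congrFun ((mem_orthogonalGroup_iff' n ℝ).1 hA) l) l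

end Matrix

instance matrixBorelSpace (N : ℕ) : BorelSpace (Matrix (Fin N) (Fin N) ℝ) :=
  inferInstanceAs (BorelSpace (Fin N → Fin N → ℝ))

@[fun_prop]
theorem Measurable.orthogonalGroup_apply {N : ℕ} {α : Type*} [MeasurableSpace α]
    {f : α → Matrix.orthogonalGroup (Fin N) ℝ} (hf : Measurable f) (i l : Fin N) :
    Measurable fun x => (f x).1 i l :=
  (measurable_pi_apply l).comp ((measurable_pi_apply i).comp (measurable_subtype_coe.comp hf))

section ColumnMoment

variable {N : ℕ} (μ : Measure (Matrix.orthogonalGroup (Fin N) ℝ))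

noncomputable def columnMoment (a b l : Fin N) (p q : ℕ) : ℝ :=
  ∫ O, O.1 a l ^ p * O.1 b l ^ q ∂μ

variable {a b l : Fin N}

theorem norm_entry_pow_mul_entry_pow_le_one (O : Matrix.orthogonalGroup (Fin N) ℝ) (p q : ℕ) :
    ‖O.1 a l ^ p * O.1 b l ^ q‖ ≤ 1 := by
  rw [norm_mul, norm_pow, norm_pow]
  exact mul_le_one₀ (pow_le_one₀ (norm_nonneg _) (entry_norm_bound_of_unitary O.2 a l))
    (by positivity) (pow_le_one₀ (norm_nonneg _) (entry_norm_bound_of_unitary O.2 b l))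

theorem integrable_entry_pow_mul_entry_pow [IsFiniteMeasure μ] (p q : ℕ) :
    Integrable (fun O : Matrix.orthogonalGroup (Fin N) ℝ => O.1 a l ^ p * O.1 b l ^ q) μ :=
  .of_bound (by fun_prop) 1 (ae_of_all _ fun O => norm_entry_pow_mul_entry_pow_le_one O p q)

variable [μ.IsMulLeftInvariant]

theorem integral_rotate_entries_eq_columnMoment (hab : a ≠ b) (θ : ℝ) (p q : ℕ) :
    ∫ O, (cos θ * O.1 a l - sin θ * O.1 b l) ^ p * (sin θ * O.1 a l + cos θ * O.1 b l) ^ q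
      ∂μ = columnMoment μ a b l p q := by
  rw [columnMoment, ← integral_mul_left_eq_self (fun O => O.1 a l ^ p * O.1 b l ^ q)
    (Matrix.planeRotationOrthogonal θ hab)]
  simp only [Matrix.planeRotationOrthogonal, Submonoid.coe_mul,
    Matrix.planeRotation_mul_apply_left θ hab, Matrix.planeRotation_mul_apply_right θ hab]

theorem columnMoment_eq_of_ne {i : Fin N} (hab : a ≠ b) (hai : a ≠ i) (p q : ℕ) :
    columnMoment μ a i l p q = columnMoment μ a b l p q := by
  rcases eq_or_ne b i with rfl | hbi
  · rfl
  rw [columnMoment, columnMoment, ← integral_mul_left_eq_self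
    (fun O => O.1 a l ^ p * O.1 i l ^ q) (Matrix.planeRotationOrthogonal (π / 2) hbi)]
  simp only [Matrix.planeRotationOrthogonal, Submonoid.coe_mul,
    Matrix.planeRotation_mul_apply_right _ hbi, Matrix.planeRotation_mul_apply_of_ne _ hab hai,
    cos_pi_div_two, sin_pi_div_two, one_mul, zero_mul, add_zero]

theorem two_pi_mul_columnMoment [IsFiniteMeasure μ] (hab : a ≠ b) (p q : ℕ) :
    2 * π * columnMoment μ a b l p q =
      trigMoment p q * ∫ O, √(O.1 a l ^ 2 + O.1 b l ^ 2) ^ (p + q) ∂μ := by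
  set F : ℝ → Matrix.orthogonalGroup (Fin N) ℝ → ℝ := fun θ O =>
    (cos θ * O.1 a l - sin θ * O.1 b l) ^ p * (sin θ * O.1 a l + cos θ * O.1 b l) ^ q
  have hF :
      Integrable (Function.uncurry F) ((volume.restrict (Set.Ioc 0 (2 * π))).prod μ) := by
    refine .of_bound (by unfold F Function.uncurry; fun_prop) 1 (ae_of_all _ fun ⟨θ, O⟩ => ?_)
    -- the rotated entries are entries of an orthogonal matrix
    simpa [F, Matrix.planeRotationOrthogonal, Matrix.planeRotation_mul_apply_left θ hab,
      Matrix.planeRotation_mul_apply_right θ hab] using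
      norm_entry_pow_mul_entry_pow_le_one (a := a) (b := b) (l := l)
        (Matrix.planeRotationOrthogonal θ hab * O) p q
  calc 2 * π * columnMoment μ a b l p q = ∫ θ in 0..2 * π, ∫ O, F θ O ∂μ := by
        simp [F, integral_rotate_entries_eq_columnMoment μ hab]
    _ = ∫ O, (∫ θ in 0..2 * π, F θ O) ∂μ := by
        simp only [integral_of_le two_pi_pos.le]
        exact integral_integral_swap hF
    _ = ∫ O, √(O.1 a l ^ 2 + O.1 b l ^ 2) ^ (p + q) * trigMoment p q ∂μ := by
        simp only [F, integral_rotate_pow_mul_pow]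
    _ = _ := by rw [MeasureTheory.integral_mul_const, mul_comm]

theorem columnMoment_mul_trigMoment [IsFiniteMeasure μ] (hab : a ≠ b) (p q : ℕ) :
    columnMoment μ a b l p q * trigMoment (p + q) 0 =
      trigMoment p q * columnMoment μ a b l (p + q) 0 := by
  have hpq := two_pi_mul_columnMoment μ (l := l) hab p q
  have hsum := two_pi_mul_columnMoment μ (l := l) hab (p + q) 0
  rw [add_zero] at hsum
  refine mul_left_cancel₀ two_pi_pos.ne' ?_
  linear_combination trigMoment (p + q) 0 * hpq - trigMoment p q * hsum

theorem columnMoment_eq_add_two_add [IsFiniteMeasure μ] (hab : a ≠ b) (p : ℕ) :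
    columnMoment μ a b l p 0 =
      columnMoment μ a b l (p + 2) 0 + ((N : ℝ) - 1) * columnMoment μ a b l p 2 := by
  have hcol : columnMoment μ a b l p 0 = ∑ i, columnMoment μ a i l p 2 := by
    simp only [columnMoment]
    rw [← integral_finsetSum _ fun i _ => integrable_entry_pow_mul_entry_pow μ p 2]
    congr 1; ext O
    rw [← Finset.mul_sum, Matrix.sum_sq_apply_of_mem_orthogonalGroup O.2, pow_zero]
  have hdiag : columnMoment μ a a l p 2 = columnMoment μ a b l (p + 2) 0 := by
    simp [columnMoment, pow_add]
  rw [hcol, ← Finset.add_sum_erase _ _ (Finset.mem_univ a), hdiag,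
    Finset.sum_congr rfl fun i hi =>
      columnMoment_eq_of_ne μ hab (Finset.ne_of_mem_erase hi).symm p 2,
    Finset.sum_const, Finset.card_erase_of_mem (Finset.mem_univ a), Finset.card_univ,
    Fintype.card_fin, nsmul_eq_mul, Nat.cast_pred a.pos]

theorem columnMoment_two_mul_add_two [IsProbabilityMeasure μ] (hab : a ≠ b) (n : ℕ) :
    (N + 2 * n) * columnMoment μ a b l (2 * n + 2) 0 =
      (2 * n + 1) * columnMoment μ a b l (2 * n) 0 := by
  have hmixed :
      (2 * n + 1) * columnMoment μ a b l (2 * n) 2 = columnMoment μ a b l (2 * n + 2) 0 := by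
    have hT := trigMoment_add_two_right (2 * n) 0
    have hm := columnMoment_mul_trigMoment μ (l := l) hab (2 * n) 2
    refine mul_right_cancel₀ (trigMoment_pos (p := 2 * n + 2) ⟨n + 1, by ring⟩ .zero).ne' ?_
    push_cast at hT
    linear_combination (2 * n + 1 : ℝ) * hm + columnMoment μ a b l (2 * n + 2) 0 * hT
  linear_combination -(2 * n + 1 : ℝ) * columnMoment_eq_add_two_add μ (l := l) hab (2 * n)
    + (1 - (N : ℝ)) * hmixed

theorem columnMoment_two_mul_mul_prod [IsProbabilityMeasure μ] (hab : a ≠ b) (n : ℕ) :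
    columnMoment μ a b l (2 * n) 0 * ∏ i ∈ Finset.range n, ((N : ℝ) + 2 * i) =
      (2 * n - 1)‼ := by
  induction n with
  | zero => simp [columnMoment]
  | succ n ih =>
    rw [Finset.prod_range_succ, show 2 * (n + 1) = 2 * n + 2 by ring,
      show 2 * n + 2 - 1 = 2 * n + 1 by omega, Nat.doubleFactorial_add_one]
    push_cast
    linear_combination (∏ i ∈ Finset.range n, ((N : ℝ) + 2 * i)) *
      columnMoment_two_mul_add_two μ (l := l) hab n + (2 * n + 1 : ℝ) * ih

theorem columnMoment_two_mul [IsProbabilityMeasure μ] (hab : a ≠ b) (k j : ℕ) :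
    columnMoment μ a b l (2 * k) (2 * j) =
      (2 * k - 1)‼ * (2 * j - 1)‼ / ∏ i ∈ Finset.range (k + j), ((N : ℝ) + 2 * i) := by
  have hP : 0 < ∏ i ∈ Finset.range (k + j), ((N : ℝ) + 2 * i) :=
    Finset.prod_pos fun i _ => by have := a.pos; positivity
  have hD : ((2 * (k + j) - 1)‼ : ℝ) ≠ 0 := by positivity
  have hT := (trigMoment_pos (p := 2 * (k + j)) (even_two_mul _) .zero).ne'
  have hmixed := columnMoment_mul_trigMoment μ (l := l) hab (2 * k) (2 * j)
  rw [← mul_add] at hmixed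
  rw [eq_div_iff hP.ne']
  refine mul_right_cancel₀ (mul_ne_zero hT hD) ?_
  linear_combination
    (∏ i ∈ Finset.range (k + j), ((N : ℝ) + 2 * i)) * (2 * (k + j) - 1)‼ * hmixed
    + trigMoment (2 * k) (2 * j) * (2 * (k + j) - 1)‼ *
      columnMoment_two_mul_mul_prod μ (l := l) hab (k + j)
    + ((2 * (k + j) - 1)‼ : ℝ) * doubleFactorial_mul_trigMoment k j

end ColumnMoment

/-- Let `O` be Haar-distributed on the orthogonal group `O(N)` (characterized as:
`μ` is a left-invariant probability measure on the orthogonal group). Then for naturals `k, j`,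
`E[O_{11}^{2k} O_{21}^{2j}] = (2k-1)!! (2j-1)!! / (N (N+2) ⋯ (N+2(k+j)-2))`. -/
theorem haar_orthogonal_joint_moments (N : ℕ) (hN : 2 ≤ N) (k j : ℕ)
    (μ : Measure (Matrix.orthogonalGroup (Fin N) ℝ)) [IsProbabilityMeasure μ]
    (hinv : ∀ g : Matrix.orthogonalGroup (Fin N) ℝ,
      Measure.map (fun x => g * x) μ = μ) :
    ∫ O : Matrix.orthogonalGroup (Fin N) ℝ,
        ((O : Matrix (Fin N) (Fin N) ℝ) ⟨0, by omega⟩ ⟨0, by omega⟩) ^ (2 * k) *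
          ((O : Matrix (Fin N) (Fin N) ℝ) ⟨1, by omega⟩ ⟨0, by omega⟩) ^ (2 * j) ∂μ =
      (Nat.doubleFactorial (2 * k - 1) : ℝ) * (Nat.doubleFactorial (2 * j - 1) : ℝ) /
        ∏ i ∈ Finset.range (k + j), ((N : ℝ) + 2 * i) := by
  have : μ.IsMulLeftInvariant := ⟨hinv⟩
  exact columnMoment_two_mul μ (by simp [Fin.ext_iff]) k j
end
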